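/- For any weights a > 0 and b > 0 and partitions ρ, ρ̂ of {1,…,n}, the generalized variation of information satisfies L_GVI(ρ, ρ̂) = 0 if and only if ρ = ρ̂. -/
import Mathlib


open Finset

/-- A partition of `{1,…,n}`: a set of nonempty, pairwise disjoint clusters covering everything. -/
def IsPartition {n : ℕ} (ρ : Finset (Finset (Fin n))) : Prop :=
  (∀ S ∈ ρ, S.Nonempty) ∧
  (∀ S ∈ ρ, ∀ T ∈ ρ, S ≠ T → Disjoint S T) ∧
  (∀ i : Fin n, ∃ S ∈ ρ, i ∈ S)

/-- Entropy of a partition: `H(ρ) = -∑_{S∈ρ} (|S|/n)·log₂(|S|/n)`. -/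
noncomputable def ent {n : ℕ} (ρ : Finset (Finset (Fin n))) : ℝ :=
  - ∑ S ∈ ρ, ((S.card : ℝ) / n) * Real.logb 2 ((S.card : ℝ) / n)

/-- Joint entropy: `H(ρ, τ) = -∑_{S∈ρ} ∑_{T∈τ} (|S∩T|/n)·log₂(|S∩T|/n)` (with `0·log₂ 0 = 0`). -/
noncomputable def jent {n : ℕ} (ρ τ : Finset (Finset (Fin n))) : ℝ :=
  - ∑ S ∈ ρ, ∑ T ∈ τ, (((S ∩ T).card : ℝ) / n) * Real.logb 2 (((S ∩ T).card : ℝ) / n)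

/-- Mutual information: `I(ρ, τ) = H(ρ) + H(τ) - H(ρ, τ)`. -/
noncomputable def mi {n : ℕ} (ρ τ : Finset (Finset (Fin n))) : ℝ :=
  ent ρ + ent τ - jent ρ τ

/-- Conditional entropy: `H(ρ ∣ τ) = H(ρ, τ) - H(τ)`. -/
noncomputable def cent {n : ℕ} (ρ τ : Finset (Finset (Fin n))) : ℝ :=
  jent ρ τ - ent τ

/-- Generalized variation of information:
`L_GVI(ρ, τ) = b·H(ρ) + a·H(τ) - (a+b)·I(ρ, τ)`. -/
noncomputable def gvi {n : ℕ} (a b : ℝ) (ρ τ : Finset (Finset (Fin n))) : ℝ :=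
  b * ent ρ + a * ent τ - (a + b) * mi ρ τ

lemma sum_inter_card {n : ℕ} {τ : Finset (Finset (Fin n))} (hτ : IsPartition τ)
    (S : Finset (Fin n)) : ∑ T ∈ τ, (S ∩ T).card = S.card := by
  have h1 : ∀ i : Fin n, ∑ T ∈ τ, (if i ∈ T then 1 else 0) = 1 := by
    intro i
    obtain ⟨T₀, hT₀, hiT₀⟩ := hτ.2.2 i
    rw [Finset.sum_eq_single T₀]
    · simp [hiT₀]
    · intro T hT hne
      have : i ∉ T := fun hi =>
        (Finset.disjoint_left.mp (hτ.2.1 T hT T₀ hT₀ hne)) hi hiT₀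
      simp [this]
    · intro h; exact absurd hT₀ h
  calc ∑ T ∈ τ, (S ∩ T).card
      = ∑ T ∈ τ, ∑ i ∈ S, (if i ∈ T then 1 else 0) := by
        refine Finset.sum_congr rfl fun T _ => ?_
        rw [← Finset.filter_mem_eq_inter, Finset.card_filter]
    _ = ∑ i ∈ S, ∑ T ∈ τ, (if i ∈ T then 1 else 0) := Finset.sum_comm
    _ = S.card := by simp [h1]

lemma jent_comm {n : ℕ} (ρ τ : Finset (Finset (Fin n))) : jent ρ τ = jent τ ρ := by
  unfold jent
  rw [Finset.sum_comm]
  simp_rw [Finset.inter_comm]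

lemma cent_key {n : ℕ} (hn : 0 < n) {ρ τ : Finset (Finset (Fin n))}
    (hρ : IsPartition ρ) (hτ : IsPartition τ) :
    0 ≤ jent ρ τ - ent ρ ∧
    (jent ρ τ - ent ρ = 0 ↔ ∀ S ∈ ρ, ∀ T ∈ τ, (S ∩ T).Nonempty → S ⊆ T) := by
  have hN : (0:ℝ) < n := Nat.cast_pos.mpr hn
  set t : Finset (Fin n) → Finset (Fin n) → ℝ := fun S T =>
    (((S ∩ T).card : ℝ) / n) *
      (Real.logb 2 ((S.card : ℝ) / n) - Real.logb 2 (((S ∩ T).card : ℝ) / n)) with ht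
  have hteq : jent ρ τ - ent ρ = ∑ S ∈ ρ, ∑ T ∈ τ, t S T := by
    unfold jent ent
    rw [neg_sub_neg, ← Finset.sum_sub_distrib]
    refine Finset.sum_congr rfl fun S hS => ?_
    have hcard : ∑ T ∈ τ, (((S ∩ T).card : ℝ) / n)
        = (S.card : ℝ) / n := by
      rw [← Finset.sum_div]
      congr 1
      rw [← Nat.cast_sum]
      exact_mod_cast congrArg (Nat.cast : ℕ → ℝ) (sum_inter_card hτ S)
    have hmul : ((S.card : ℝ) / n) * Real.logb 2 ((S.card : ℝ) / n)
        = ∑ T ∈ τ, (((S ∩ T).card : ℝ) / n) * Real.logb 2 ((S.card : ℝ) / n) := by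
      rw [← Finset.sum_mul, hcard]
    rw [hmul, ← Finset.sum_sub_distrib]
    refine Finset.sum_congr rfl fun T _ => ?_
    simp only [ht]; ring
  have hnonneg : ∀ S ∈ ρ, ∀ T ∈ τ, 0 ≤ t S T := by
    intro S hS T hT
    rcases Nat.eq_zero_or_pos (S ∩ T).card with h0 | hpos
    · simp [ht, h0]
    · have hle : (S ∩ T).card ≤ S.card := Finset.card_le_card Finset.inter_subset_left
      have h1 : (0:ℝ) < ((S ∩ T).card : ℝ) / n := by positivity
      have h1' : (0:ℝ) < (S.card : ℝ) / n := by
        have : 0 < S.card := lt_of_lt_of_le hpos hle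
        positivity
      have h2 : Real.logb 2 (((S ∩ T).card : ℝ) / n) ≤ Real.logb 2 ((S.card : ℝ) / n) :=
        (Real.logb_le_logb one_lt_two h1 h1').mpr
          (by first | (gcongr; exact_mod_cast hle) | gcongr)
      have := sub_nonneg.mpr h2
      positivity
  constructor
  · rw [hteq]
    exact Finset.sum_nonneg fun S hS => Finset.sum_nonneg fun T hT => hnonneg S hS T hT
  · rw [hteq]
    rw [Finset.sum_eq_zero_iff_of_nonneg
      (fun S hS => Finset.sum_nonneg fun T hT => hnonneg S hS T hT)]
    constructor
    · intro hz S hS T hT hne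
      have hz2 := (Finset.sum_eq_zero_iff_of_nonneg (fun T hT => hnonneg S hS T hT)).mp
        (hz S hS) T hT
      by_contra hsub
      have hlt : (S ∩ T).card < S.card := by
        refine lt_of_le_of_ne (Finset.card_le_card Finset.inter_subset_left) fun hc => ?_
        exact hsub (Finset.inter_eq_left.mp
          (Finset.eq_of_subset_of_card_le Finset.inter_subset_left hc.ge))
      have hpos : 0 < (S ∩ T).card := Finset.card_pos.mpr hne
      have h1 : (0:ℝ) < ((S ∩ T).card : ℝ) / n := by positivity
      have h2 : Real.logb 2 (((S ∩ T).card : ℝ) / n) < Real.logb 2 ((S.card : ℝ) / n) :=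
        Real.logb_lt_logb one_lt_two h1
          (by first | (gcongr; exact_mod_cast hlt) | (gcongr <;> exact_mod_cast hlt))
      have : 0 < t S T := by
        have := sub_pos.mpr h2
        simp only [ht]
        positivity
      linarith [hz2, this]
    · intro hc S hS
      refine Finset.sum_eq_zero fun T hT => ?_
      rcases Nat.eq_zero_or_pos (S ∩ T).card with h0 | hpos
      · simp [ht, h0]
      · have hST : S ⊆ T := hc S hS T hT (Finset.card_pos.mp hpos)
        have : S ∩ T = S := Finset.inter_eq_left.mpr hST
        simp [ht, this]

lemma jent_self {n : ℕ} {ρ : Finset (Finset (Fin n))} (hρ : IsPartition ρ) :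
    jent ρ ρ = ent ρ := by
  unfold jent ent
  congr 1
  refine Finset.sum_congr rfl fun S hS => ?_
  rw [Finset.sum_eq_single S]
  · rw [Finset.inter_self]
  · intro T hT hne
    have : S ∩ T = ∅ := Finset.disjoint_iff_inter_eq_empty.mp (hρ.2.1 S hS T hT hne.symm)
    simp [this]
  · intro h; exact absurd hS h

/-- For any weights `a, b > 0` and partitions `ρ, τ` of `{1,…,n}`, the generalized variation of
information satisfies `L_GVI(ρ, τ) = 0` iff `ρ = τ`. -/
theorem gvi_identity_of_indiscernibles (n : ℕ) (a b : ℝ) (ha : 0 < a) (hb : 0 < b)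
    (ρ τ : Finset (Finset (Fin n))) (hρ : IsPartition ρ) (hτ : IsPartition τ) :
    gvi a b ρ τ = 0 ↔ ρ = τ := by
  have halg : gvi a b ρ τ = a * (jent ρ τ - ent ρ) + b * (jent ρ τ - ent τ) := by
    unfold gvi mi; ring
  constructor
  · intro h0
    rcases Nat.eq_zero_or_pos n with hn | hn
    · subst hn
      have e : ∀ σ : Finset (Finset (Fin 0)), IsPartition σ → σ = ∅ := by
        intro σ hσ
        rw [Finset.eq_empty_iff_forall_notMem]
        intro S hS
        obtain ⟨i, _⟩ := hσ.1 S hS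
        exact i.elim0
      rw [e ρ hρ, e τ hτ]
    · obtain ⟨h1n, h1e⟩ := cent_key hn hρ hτ
      obtain ⟨h2n, h2e⟩ := cent_key hn hτ hρ
      rw [jent_comm τ ρ] at h2n h2e
      have hz1 : jent ρ τ - ent ρ = 0 := by rw [halg] at h0; nlinarith
      have hz2 : jent ρ τ - ent τ = 0 := by rw [halg] at h0; nlinarith
      have hc1 := h1e.mp hz1
      have hc2 := h2e.mp hz2
      apply Finset.Subset.antisymm
      · intro S hS
        obtain ⟨i, hi⟩ := hρ.1 S hS
        obtain ⟨T, hT, hiT⟩ := hτ.2.2 i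
        have hne : (S ∩ T).Nonempty := ⟨i, Finset.mem_inter.mpr ⟨hi, hiT⟩⟩
        have hST := hc1 S hS T hT hne
        have hTS := hc2 T hT S hS (by rwa [Finset.inter_comm])
        rwa [Finset.Subset.antisymm hST hTS]
      · intro T hT
        obtain ⟨i, hi⟩ := hτ.1 T hT
        obtain ⟨S, hS, hiS⟩ := hρ.2.2 i
        have hne : (S ∩ T).Nonempty := ⟨i, Finset.mem_inter.mpr ⟨hiS, hi⟩⟩
        have hST := hc1 S hS T hT hne
        have hTS := hc2 T hT S hS (by rwa [Finset.inter_comm])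
        rwa [← Finset.Subset.antisymm hST hTS]
  · intro h; subst h
    rw [halg, jent_self hρ]
    ring
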